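/- For the tightly coupled chain (ℓ₁ = 0): if A − 1/2 is an integer, then for every positive integer n, at k = n − 1/2 one has a(k) = b(k) = c(k) = 0, for all ℓ₃ ∈ (0,2π) and all ℓ > 0; hence k² = (n − 1/2)² is a flat band. -/
import Mathlib


open Real

/-- The function `a` of the Floquet spectral condition of the tightly coupled
magnetic ring chain (`ℓ₁ = 0`), with vertex coupling parameter `ℓ`, ring-arc
lengths `2π - ℓ₃` and `ℓ₃`, and magnetic potential `A`. -/
noncomputable def tightA (ℓ ℓ₃ A k : ℝ) : ℝ :=
  (k * ℓ + 1) ^ 2 * Real.sin ((A + k) * π) * Real.cos ((A - k) * (π - ℓ₃))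
    - (k * ℓ - 1) ^ 2 * Real.sin ((A - k) * π) * Real.cos ((A + k) * (π - ℓ₃))

/-- The function `b` of the Floquet spectral condition of the tightly coupled chain. -/
noncomputable def tightB (ℓ ℓ₃ A k : ℝ) : ℝ :=
  (k * ℓ - 1) ^ 2 * Real.sin ((A - k) * π) * Real.sin ((A + k) * (π - ℓ₃))
    - (k * ℓ + 1) ^ 2 * Real.sin ((A + k) * π) * Real.sin ((A - k) * (π - ℓ₃))

/-- The function `c` of the Floquet spectral condition of the tightly coupled chain. -/
noncomputable def tightC (ℓ A k : ℝ) : ℝ :=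
  2 * k * ℓ * Real.sin (2 * A * π) + (k ^ 2 * ℓ ^ 2 + 1) * Real.sin (2 * k * π)

theorem stmt_9 (A : ℝ) (hA : ∃ m : ℤ, A - 1 / 2 = m) (n : ℕ) (hn : 0 < n)
    (k : ℝ) (hk : k = (n : ℝ) - 1 / 2) :
    ∀ ℓ₃ ∈ Set.Ioo 0 (2 * π), ∀ ℓ : ℝ, 0 < ℓ →
      tightA ℓ ℓ₃ A k = 0 ∧ tightB ℓ ℓ₃ A k = 0 ∧ tightC ℓ A k = 0 := by
  obtain ⟨m, hm⟩ := hA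
  have hA' : A = (m : ℝ) + 1 / 2 := by linarith
  intro ℓ₃ _ ℓ _
  have h1 : Real.sin ((A + k) * π) = 0 := by
    have : (A + k) * π = (m + n : ℤ) * π := by push_cast; rw [hA', hk]; ring
    rw [this, Real.sin_int_mul_pi]
  have h2 : Real.sin ((A - k) * π) = 0 := by
    have : (A - k) * π = (m - n + 1 : ℤ) * π := by push_cast; rw [hA', hk]; ring
    rw [this, Real.sin_int_mul_pi]
  have h3 : Real.sin (2 * A * π) = 0 := by
    have : 2 * A * π = (2 * m + 1 : ℤ) * π := by push_cast; rw [hA']; ring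
    rw [this, Real.sin_int_mul_pi]
  have h4 : Real.sin (2 * k * π) = 0 := by
    have : 2 * k * π = (2 * n - 1 : ℤ) * π := by push_cast; rw [hk]; ring
    rw [this, Real.sin_int_mul_pi]
  refine ⟨?_, ?_, ?_⟩ <;> simp [tightA, tightB, tightC, h1, h2, h3, h4]
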